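/- arXiv:1611.08055 — 3 statements merged into one kernel-verified Lean document; each statement's English description precedes it below -/
import Mathlib

section
/- Threshold structure for a two-action discounted MDP on ℕ × ℕ with unit packet lengths: with transitions f₁(τ₁, τ₂) = (1, τ₂+1), f₂(τ₁, τ₂) = (τ₁+1, 1), additive separable monotone cost c(τ₁, τ₂) = g₁(τ₁) + g₂(τ₂) with g₁, g₂ nondecreasing, discount α ∈ (0,1), and value function V satisfying V(s) = min{c(s) + αV(f₁(s)), c(s) + αV(f₂(s))}: if action 1 is optimal at (τ₁, τ₂) (i.e., V(f₁(τ₁,τ₂)) ≤ V(f₂(τ₁,τ₂))), then action 1 is optimal at (τ₁ + z, τ₂) for every positive integer z. -/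
/-- Threshold structure for the unit-packet two-action discounted MDP: with transitions
`f₁(τ₁,τ₂) = (1,τ₂+1)`, `f₂(τ₁,τ₂) = (τ₁+1,1)`, separable monotone bounded cost
`c = g₁ + g₂`, and `V` the bounded fixed point of the Bellman equation, if action 1 is
optimal at `(τ₁, τ₂)` then it is optimal at `(τ₁ + z, τ₂)` for every positive `z`. -/
theorem threshold_structure
    (g₁ g₂ : ℕ → ℝ) (hg₁ : Monotone g₁) (hg₂ : Monotone g₂)
    (hg₁b : ∃ M : ℝ, ∀ k, |g₁ k| ≤ M) (hg₂b : ∃ M : ℝ, ∀ k, |g₂ k| ≤ M)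
    (α : ℝ) (hα : 0 < α) (hα1 : α < 1)
    (V : ℕ × ℕ → ℝ) (hVb : ∃ M : ℝ, ∀ s, |V s| ≤ M)
    (hV : ∀ s : ℕ × ℕ, V s = g₁ s.1 + g₂ s.2 + α * min (V (1, s.2 + 1)) (V (s.1 + 1, 1)))
    (τ₁ τ₂ : ℕ) (hopt : V (1, τ₂ + 1) ≤ V (τ₁ + 1, 1)) :
    ∀ z : ℕ, 0 < z → V (1, τ₂ + 1) ≤ V (τ₁ + z + 1, 1) := by
  obtain ⟨M, hM⟩ := hVb
  set m : ℝ := V (1, 2) with hm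
  set D : ℕ → ℝ := fun a => max 0 (V (a + 1, 1) - V (a + 2, 1)) with hD
  have hDeq : ∀ a, D a = max 0 (V (a + 1, 1) - V (a + 2, 1)) := fun a => rfl
  have hDnn : ∀ a, 0 ≤ D a := fun a => le_max_left _ _
  have hDbound : ∀ a, D a ≤ 2 * M := by
    intro a
    have h1 := abs_le.1 (hM (a + 1, 1))
    have h2 := abs_le.1 (hM (a + 2, 1))
    have h0 : (0:ℝ) ≤ M := le_trans (abs_nonneg _) (hM (a + 1, 1))
    exact max_le (by linarith) (by linarith)
  have hstep : ∀ a, D a ≤ α * D (a + 1) := by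
    intro a
    have e1' : V (a + 1, 1) = g₁ (a + 1) + g₂ 1 + α * min m (V (a + 2, 1)) := by
      rw [hV (a + 1, 1), hm]
    have e2' : V (a + 2, 1) = g₁ (a + 2) + g₂ 1 + α * min m (V (a + 3, 1)) := by
      rw [hV (a + 2, 1), hm]
    have hD1 : D (a + 1) = max 0 (V (a + 2, 1) - V (a + 3, 1)) := by
      rw [hDeq]
    have hg : g₁ (a + 1) ≤ g₁ (a + 2) := hg₁ (by omega)
    have hmin : min m (V (a + 2, 1)) - min m (V (a + 3, 1)) ≤ D (a + 1) := by
      rw [hD1]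
      rcases le_total (V (a + 2, 1)) (V (a + 3, 1)) with h | h
      · have h1 : min m (V (a + 2, 1)) ≤ min m (V (a + 3, 1)) := min_le_min le_rfl h
        have h2 : (0:ℝ) ≤ max 0 (V (a + 2, 1) - V (a + 3, 1)) := le_max_left _ _
        linarith
      · have h5 : V (a + 2, 1) - V (a + 3, 1) ≤ max 0 (V (a + 2, 1) - V (a + 3, 1)) :=
          le_max_right _ _
        rcases le_total m (V (a + 3, 1)) with hma | hma
        · have h1 : min m (V (a + 2, 1)) = m := min_eq_left (le_trans hma h)
          have h2 : min m (V (a + 3, 1)) = m := min_eq_left hma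
          have h2' : (0:ℝ) ≤ max 0 (V (a + 2, 1) - V (a + 3, 1)) := le_max_left _ _
          rw [h1, h2]; linarith
        · have h3 : min m (V (a + 3, 1)) = V (a + 3, 1) := min_eq_right hma
          have h4 : min m (V (a + 2, 1)) ≤ V (a + 2, 1) := min_le_right _ _
          rw [h3]; linarith
    have hmul : α * (min m (V (a + 2, 1)) - min m (V (a + 3, 1))) ≤ α * D (a + 1) :=
      mul_le_mul_of_nonneg_left hmin hα.le
    have key : V (a + 1, 1) - V (a + 2, 1) ≤ α * D (a + 1) := by
      rw [mul_sub] at hmul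
      linarith
    exact max_le (mul_nonneg hα.le (hDnn _)) key
  have hiter : ∀ n a, D a ≤ α ^ n * D (a + n) := by
    intro n
    induction n with
    | zero => intro a; simp
    | succ k ih =>
      intro a
      calc D a ≤ α * D (a + 1) := hstep a
        _ ≤ α * (α ^ k * D (a + 1 + k)) :=
            mul_le_mul_of_nonneg_left (ih (a + 1)) hα.le
        _ = α ^ (k + 1) * D (a + (k + 1)) := by ring_nf
  have hDzero : ∀ a, D a ≤ 0 := by
    intro a
    have hub : ∀ n, D a ≤ α ^ n * (2 * M) := fun n =>
      le_trans (hiter n a)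
        (mul_le_mul_of_nonneg_left (hDbound _) (pow_nonneg hα.le n))
    have htend : Filter.Tendsto (fun n => α ^ n * (2 * M)) Filter.atTop (nhds 0) := by
      have := (tendsto_pow_atTop_nhds_zero_of_lt_one hα.le hα1).mul_const (2 * M)
      simpa using this
    exact ge_of_tendsto' htend hub
  have hmono : Monotone fun a => V (a + 1, 1) := by
    apply monotone_nat_of_le_succ
    intro a
    have h2 : V (a + 1, 1) - V (a + 2, 1) ≤ 0 :=
      le_trans (le_max_right _ _) (by rw [← hDeq]; exact hDzero a)
    have h3 : V (a + 1, 1) ≤ V (a + 2, 1) := by linarith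
    show V (a + 1, 1) ≤ V (a + 1 + 1, 1)
    rw [show a + 1 + 1 = a + 2 from by omega]
    exact h3
  intro z _
  calc V (1, τ₂ + 1) ≤ V (τ₁ + 1, 1) := hopt
    _ ≤ V (τ₁ + z + 1, 1) := hmono (Nat.le_add_right τ₁ z)
end

section
/- Geometric trace growth lower bound: if A is an n×n real matrix with an eigenvalue λ satisfying |λ| > 1, Q ⪰ 0, and X ⪰ εI for some ε > 0, then Tr(h^ℓ(X)) ≥ ε·|λ|^{2ℓ} for all ℓ ≥ 0, where h(X) = A X Aᵀ + Q; in particular Tr(h^ℓ(X)) → ∞. -/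
/-!
Since `Q ⪰ 0`, every iterate dominates the noise-free one: `h^ℓ(X) ⪰ A^ℓ X (A^ℓ)ᵀ`, and since
`X ⪰ εI` the trace of the latter is at least `ε Tr(A^ℓ (A^ℓ)ᵀ) = ε ‖A^ℓ‖_F²`. Finally `λ^ℓ` is an
eigenvalue of `A^ℓ`, and the modulus of any eigenvalue is bounded by the Frobenius norm
(apply submultiplicativity to `A^ℓ` times an eigenvector viewed as a column), so
`‖A^ℓ‖_F² ≥ |λ|^{2ℓ}`.
-/

open Matrix Filter

namespace Matrix

variable {ι : Type*} [Fintype ι]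

theorem exists_mulVec_eq_smul_of_mem_spectrum [DecidableEq ι] {K : Type*} [Field K]
    {M : Matrix ι ι K} {μ : K} (h : μ ∈ spectrum K M) : ∃ v ≠ 0, M *ᵥ v = μ • v := by
  rw [← spectrum_toLin', ← Module.End.hasEigenvalue_iff_mem_spectrum] at h
  obtain ⟨v, hv, hv0⟩ := h.exists_hasEigenvector
  exact ⟨v, hv0, by rwa [Module.End.mem_eigenspace_iff, toLin'_apply] at hv⟩

section Frobenius

open scoped Norms.Frobenius

theorem norm_le_frobenius_norm_of_mem_spectrum [DecidableEq ι] {𝕜 : Type*} [RCLike 𝕜]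
    {M : Matrix ι ι 𝕜} {μ : 𝕜} (h : μ ∈ spectrum 𝕜 M) : ‖μ‖ ≤ ‖M‖ := by
  obtain ⟨v, hv0, hv⟩ := exists_mulVec_eq_smul_of_mem_spectrum h
  have hcol : 0 < ‖replicateCol Unit v‖ := norm_pos_iff.2 (by simpa using hv0)
  have key : ‖μ‖ * ‖replicateCol Unit v‖ ≤ ‖M‖ * ‖replicateCol Unit v‖ :=
    calc ‖μ‖ * ‖replicateCol Unit v‖ = ‖replicateCol Unit (M *ᵥ v)‖ := by
          rw [hv, replicateCol_smul, norm_smul]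
      _ = ‖M * replicateCol Unit v‖ := by rw [replicateCol_mulVec]
      _ ≤ ‖M‖ * ‖replicateCol Unit v‖ := frobenius_norm_mul _ _
  exact le_of_mul_le_mul_right key hcol

theorem frobenius_norm_sq_eq_trace_mul_transpose {m : Type*} [Fintype m] (B : Matrix m ι ℝ) :
    ‖B‖ ^ 2 = (B * Bᵀ).trace := by
  rw [frobenius_norm_def, ← Real.rpow_natCast, ← Real.rpow_mul (by positivity)]
  norm_num [trace, mul_apply, sq]

theorem sq_norm_le_trace_mul_transpose_of_mem_spectrum [DecidableEq ι] {B : Matrix ι ι ℝ}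
    {μ : ℂ} (h : μ ∈ spectrum ℂ (B.map (Complex.ofReal ·))) : ‖μ‖ ^ 2 ≤ (B * Bᵀ).trace := by
  have hμ := norm_le_frobenius_norm_of_mem_spectrum h
  rw [frobenius_norm_map_eq _ _ Complex.norm_real] at hμ
  rw [← frobenius_norm_sq_eq_trace_mul_transpose]
  gcongr

end Frobenius

theorem posSemidef_iterate_sub_pow_mul_mul_transpose_pow [DecidableEq ι] (A Q X : Matrix ι ι ℝ)
    (hQ : Q.PosSemidef) (ℓ : ℕ) :
    ((fun Z => A * Z * Aᵀ + Q)^[ℓ] X - A ^ ℓ * X * (A ^ ℓ)ᵀ).PosSemidef := by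
  induction ℓ with
  | zero => simpa using PosSemidef.zero
  | succ ℓ ih =>
    have step : A * ((fun Z => A * Z * Aᵀ + Q)^[ℓ] X - A ^ ℓ * X * (A ^ ℓ)ᵀ) * Aᵀ + Q =
        (fun Z => A * Z * Aᵀ + Q)^[ℓ + 1] X - A ^ (ℓ + 1) * X * (A ^ (ℓ + 1))ᵀ := by
      rw [Function.iterate_succ_apply', pow_succ', transpose_mul]
      simp only [Matrix.mul_sub, Matrix.sub_mul, Matrix.mul_assoc]
      abel
    rw [← step]
    simpa only [conjTranspose_eq_transpose_of_trivial] using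
      (ih.mul_mul_conjTranspose_same A).add hQ

theorem smul_trace_mul_transpose_le_trace_mul_mul_transpose [DecidableEq ι] {m : Type*}
    [Fintype m] {X : Matrix ι ι ℝ} {ε : ℝ} (hXε : (X - ε • (1 : Matrix ι ι ℝ)).PosSemidef)
    (B : Matrix m ι ℝ) : ε * (B * Bᵀ).trace ≤ (B * X * Bᵀ).trace := by
  have h := (hXε.mul_mul_conjTranspose_same B).trace_nonneg
  rw [conjTranspose_eq_transpose_of_trivial, Matrix.mul_sub, Matrix.sub_mul, Matrix.mul_smul,
    Matrix.mul_one, Matrix.smul_mul, trace_sub, trace_smul, smul_eq_mul] at h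
  linarith

end Matrix

theorem trace_geometric_growth_general {n : ℕ} (A Q X : Matrix (Fin n) (Fin n) ℝ)
    (lam : ℂ) (hlam : lam ∈ spectrum ℂ (A.map (Complex.ofReal ·)))
    (habs : 1 < ‖lam‖)
    (hQ : Q.PosSemidef) (ε : ℝ) (hε : 0 < ε)
    (hXε : (X - ε • (1 : Matrix (Fin n) (Fin n) ℝ)).PosSemidef) :
    (∀ ℓ : ℕ, ε * ‖lam‖ ^ (2 * ℓ) ≤ ((fun Z => A * Z * Aᵀ + Q)^[ℓ] X).trace) ∧
      Tendsto (fun ℓ : ℕ => ((fun Z => A * Z * Aᵀ + Q)^[ℓ] X).trace) atTop atTop := by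
  have hbound (ℓ : ℕ) : ε * ‖lam‖ ^ (2 * ℓ) ≤ ((fun Z => A * Z * Aᵀ + Q)^[ℓ] X).trace := by
    have hpow : lam ^ ℓ ∈ spectrum ℂ ((A ^ ℓ).map (Complex.ofReal ·)) := by
      rw [show (A ^ ℓ).map (Complex.ofReal ·) = (A.map (Complex.ofReal ·)) ^ ℓ from
        map_pow Complex.ofRealHom.mapMatrix A ℓ]
      exact spectrum.pow_mem_pow _ ℓ hlam
    have hdom := (posSemidef_iterate_sub_pow_mul_mul_transpose_pow A Q X hQ ℓ).trace_nonneg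
    rw [trace_sub, sub_nonneg] at hdom
    calc ε * ‖lam‖ ^ (2 * ℓ) = ε * ‖lam ^ ℓ‖ ^ 2 := by rw [norm_pow, ← pow_mul, mul_comm ℓ]
      _ ≤ ε * (A ^ ℓ * (A ^ ℓ)ᵀ).trace := by
        gcongr; exact sq_norm_le_trace_mul_transpose_of_mem_spectrum hpow
      _ ≤ (A ^ ℓ * X * (A ^ ℓ)ᵀ).trace :=
        smul_trace_mul_transpose_le_trace_mul_mul_transpose hXε _
      _ ≤ _ := hdom
  refine ⟨hbound, tendsto_atTop_mono hbound ?_⟩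
  simp_rw [pow_mul]
  exact (tendsto_pow_atTop_atTop_of_one_lt (one_lt_pow₀ habs two_ne_zero)).const_mul_atTop hε

/-- Geometric trace growth: if `A` has a (complex) eigenvalue `λ` with `|λ| > 1`, `Q ⪰ 0`
and `X ⪰ ε I` with `ε > 0`, then `Tr(h^ℓ(X)) ≥ ε |λ|^{2ℓ}` where `h(X) = A X Aᵀ + Q`;
in particular the trace tends to infinity. -/
theorem trace_geometric_growth {n : ℕ} (A Q X : Matrix (Fin n) (Fin n) ℝ)
    (lam : ℂ) (hlam : lam ∈ spectrum ℂ (A.map (Complex.ofReal ·)))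
    (habs : 1 < ‖lam‖)
    (hQ : Q.PosSemidef) (ε : ℝ) (hε : 0 < ε) (hX : X.IsHermitian)
    (hXε : (X - ε • (1 : Matrix (Fin n) (Fin n) ℝ)).PosSemidef) :
    (∀ ℓ : ℕ, ε * ‖lam‖ ^ (2 * ℓ) ≤ ((fun Z => A * Z * Aᵀ + Q)^[ℓ] X).trace) ∧
      Tendsto (fun ℓ : ℕ => ((fun Z => A * Z * Aᵀ + Q)^[ℓ] X).trace) atTop atTop :=
  trace_geometric_growth_general A Q X lam hlam habs hQ ε hε hXε
end

section
/- Discounted-to-average limit for finite deterministic MDPs: for a finite state space S, finite action set, deterministic transitions and bounded cost, letting V_α be the optimal α-discounted value function and u_α(s) = V_α(s) − V_α(s₀) for a fixed reference state s₀, every sequence α_n ↑ 1 admits a subsequence along which u_{α_n} converges pointwise to a function V, and (1−α_n)V_{α_n}(s₀) converges to a constant ρ* satisfying the average optimality equation ρ* + V(s) = min_a [c(s,a) + V(f(s,a))] for all s ∈ S. -/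
/-!
Subtracting `α V_α(s₀)` from both sides of the discounted Bellman equation gives the relative
equation `ρ_α + u_α(s) = min_a [c(s,a) + α u_α(f(s,a))]` with `ρ_α = (1-α) V_α(s₀)`;
evaluated at `s₀` it bounds `ρ_α` by `max |c| + M`. Bolzano–Weierstrass in the
finite-dimensional space `(S → ℝ) × ℝ` yields a convergent subsequence of `(u_αₙ, ρ_αₙ)`, and
since a minimum over finitely many actions is continuous, the relative equation passes to the
limit `αₙ → 1`.
-/

open Filter Finset Topology

section Bellman

variable {S A : Type*} [Fintype A] [Nonempty A] (f : S × A → S) (c : S × A → ℝ)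

theorem relative_bellman_eq {α : ℝ} {V : S → ℝ}
    (hV : ∀ s, V s = univ.inf' univ_nonempty fun a : A => c (s, a) + α * V (f (s, a)))
    (s₀ s : S) :
    (1 - α) * V s₀ + (V s - V s₀) =
      univ.inf' univ_nonempty fun a : A => c (s, a) + α * (V (f (s, a)) - V s₀) := by
  have hshift := map_finset_inf' (OrderIso.addRight (-(α * V s₀))) univ_nonempty
    fun a : A => c (s, a) + α * V (f (s, a))
  simp only [OrderIso.addRight_apply, ← hV, Function.comp_def] at hshift
  rw [show (fun a : A => c (s, a) + α * (V (f (s, a)) - V s₀)) =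
      fun a => c (s, a) + α * V (f (s, a)) + -(α * V s₀) by funext a; ring, ← hshift]
  ring

theorem abs_average_cost_le {α C M : ℝ} {V : S → ℝ}
    (hV : ∀ s, V s = univ.inf' univ_nonempty fun a : A => c (s, a) + α * V (f (s, a)))
    (hα : |α| ≤ 1) (hc : ∀ p, |c p| ≤ C) {s₀ : S} (hu : ∀ s, |V s - V s₀| ≤ M) :
    |(1 - α) * V s₀| ≤ C + M := by
  have hρ := relative_bellman_eq f c hV s₀ s₀
  rw [sub_self, add_zero] at hρ
  obtain ⟨a, -, ha⟩ := exists_mem_eq_inf' (univ_nonempty (α := A))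
    fun a : A => c (s₀, a) + α * (V (f (s₀, a)) - V s₀)
  rw [hρ, ha]
  calc |c (s₀, a) + α * (V (f (s₀, a)) - V s₀)|
      ≤ |c (s₀, a)| + |α| * |V (f (s₀, a)) - V s₀| := by
        rw [← abs_mul]; exact abs_add_le _ _
    _ ≤ C + 1 * M := by gcongr; exacts [hc _, hu _]
    _ = C + M := by rw [one_mul]

theorem average_optimality_of_tendsto {ι : Type*} {l : Filter ι} [l.NeBot]
    {α ρ : ι → ℝ} {u : ι → S → ℝ} {h : S → ℝ} {ρstar : ℝ}
    (hα : Tendsto α l (𝓝 1)) (hu : ∀ s, Tendsto (u · s) l (𝓝 (h s)))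
    (hρ : Tendsto ρ l (𝓝 ρstar))
    (hbellman : ∀ i s, ρ i + u i s =
      univ.inf' univ_nonempty fun a : A => c (s, a) + α i * u i (f (s, a)))
    (s : S) :
    ρstar + h s = univ.inf' univ_nonempty fun a : A => c (s, a) + h (f (s, a)) := by
  have hrhs : Tendsto (fun i => univ.inf' univ_nonempty
      fun a : A => c (s, a) + α i * u i (f (s, a))) l
      (𝓝 (univ.inf' univ_nonempty fun a : A => c (s, a) + h (f (s, a)))) := by
    refine Tendsto.finset_inf'_nhds_apply univ_nonempty fun a _ => ?_
    simpa using tendsto_const_nhds.add (hα.mul (hu (f (s, a))))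
  exact tendsto_nhds_unique ((hρ.add (hu s)).congr fun i => hbellman i s) hrhs

end Bellman

theorem vanishing_discount_average_optimality_general
    (S A : Type) [Fintype S] [Fintype A] [Nonempty A]
    (f : S × A → S) (c : S × A → ℝ) (s₀ : S)
    (V : ℝ → S → ℝ)
    (hV : ∀ α ∈ Set.Ioo (0 : ℝ) 1, ∀ s : S,
      V α s = Finset.univ.inf' Finset.univ_nonempty fun a : A => c (s, a) + α * V α (f (s, a)))
    (hub : ∃ M : ℝ, ∀ α ∈ Set.Ioo (0 : ℝ) 1, ∀ s : S, |V α s - V α s₀| ≤ M) :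
    ∀ αseq : ℕ → ℝ, (∀ n, αseq n ∈ Set.Ioo (0 : ℝ) 1) → Tendsto αseq atTop (nhds 1) →
      ∃ φ : ℕ → ℕ, StrictMono φ ∧ ∃ (Vlim : S → ℝ) (ρstar : ℝ),
        (∀ s : S, Tendsto (fun n => V (αseq (φ n)) s - V (αseq (φ n)) s₀)
            atTop (nhds (Vlim s))) ∧
        Tendsto (fun n => (1 - αseq (φ n)) * V (αseq (φ n)) s₀) atTop (nhds ρstar) ∧
        (∀ s : S, ρstar + Vlim s =
          Finset.univ.inf' Finset.univ_nonempty fun a : A => c (s, a) + Vlim (f (s, a))) := by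
  intro αseq hmem hlim
  obtain ⟨M, hM⟩ := hub
  obtain ⟨C, hC⟩ := Finite.exists_le fun p : S × A => |c p|
  have hM₀ : 0 ≤ M := by simpa using hM _ (hmem 0) s₀
  have hα : ∀ n, |αseq n| ≤ 1 := fun n => abs_le.2 ⟨by linarith [(hmem n).1], (hmem n).2.le⟩
  set u : ℕ → S → ℝ := fun n s => V (αseq n) s - V (αseq n) s₀
  set ρ : ℕ → ℝ := fun n => (1 - αseq n) * V (αseq n) s₀
  have hbounded : ∀ n, (u n, ρ n) ∈ Metric.closedBall (0 : (S → ℝ) × ℝ) (max M (C + M)) := by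
    intro n
    rw [mem_closedBall_zero_iff, Prod.norm_def]
    refine max_le_max ((pi_norm_le_iff_of_nonneg hM₀).2 fun s => hM _ (hmem n) s) ?_
    exact abs_average_cost_le f c (hV _ (hmem n)) (hα n) hC (hM _ (hmem n))
  obtain ⟨⟨h, ρstar⟩, -, φ, hφ, hconv⟩ :=
    tendsto_subseq_of_bounded Metric.isBounded_closedBall hbounded
  have hu : ∀ s, Tendsto (fun n => u (φ n) s) atTop (𝓝 (h s)) :=
    tendsto_pi_nhds.1 hconv.fst_nhds
  refine ⟨φ, hφ, h, ρstar, hu, hconv.snd_nhds,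
    average_optimality_of_tendsto f c (hlim.comp hφ.tendsto_atTop) hu hconv.snd_nhds
      fun n => relative_bellman_eq f c (hV _ (hmem (φ n))) s₀⟩

/-- Vanishing-discount limit for finite deterministic MDPs: if `V α` is the α-discounted
optimal value and the relative values `V α · - V α s₀` are uniformly bounded, then every
sequence `αₙ → 1` in `(0,1)` has a subsequence along which the relative values converge
pointwise to some `V` and `(1-αₙ) V_{αₙ}(s₀)` converges to some `ρ*` satisfying the
average optimality equation `ρ* + V(s) = min_a [c(s,a) + V(f(s,a))]`. -/
theorem vanishing_discount_average_optimality
    (S A : Type) [Fintype S] [Nonempty S] [Fintype A] [Nonempty A]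
    (f : S × A → S) (c : S × A → ℝ) (s₀ : S)
    (V : ℝ → S → ℝ)
    (hV : ∀ α ∈ Set.Ioo (0 : ℝ) 1, ∀ s : S,
      V α s = Finset.univ.inf' Finset.univ_nonempty fun a : A => c (s, a) + α * V α (f (s, a)))
    (hub : ∃ M : ℝ, ∀ α ∈ Set.Ioo (0 : ℝ) 1, ∀ s : S, |V α s - V α s₀| ≤ M) :
    ∀ αseq : ℕ → ℝ, (∀ n, αseq n ∈ Set.Ioo (0 : ℝ) 1) → Tendsto αseq atTop (nhds 1) →
      ∃ φ : ℕ → ℕ, StrictMono φ ∧ ∃ (Vlim : S → ℝ) (ρstar : ℝ),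
        (∀ s : S, Tendsto (fun n => V (αseq (φ n)) s - V (αseq (φ n)) s₀)
            atTop (nhds (Vlim s))) ∧
        Tendsto (fun n => (1 - αseq (φ n)) * V (αseq (φ n)) s₀) atTop (nhds ρstar) ∧
        (∀ s : S, ρstar + Vlim s =
          Finset.univ.inf' Finset.univ_nonempty fun a : A => c (s, a) + Vlim (f (s, a))) :=
  vanishing_discount_average_optimality_general S A f c s₀ V hV hub
end
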